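/- Let A be a ring, I ⊆ A a two-sided ideal, and D, P, P' ∈ A with 1 − PD, 1 − DP, 1 − P'D, 1 − DP' all in I. Let p(Q) ∈ M₂(A) denote the idempotent [[S₊², S₊(1+S₊)Q], [S₋D, 1 − S₋²]] built from a parametrix Q (with S₊ = 1 − QD, S₋ = 1 − DQ), and p₀ = diag(0,1). Then the K-theory class [p(P)] − [p₀] equals [p(P')] − [p₀] in K₀(I); i.e. the index class is independent of the choice of parametrix. -/
import Mathlib


/-- The index idempotent `p(Q) = [[S₊², S₊(1+S₊)Q], [S₋D, 1 − S₋²]]` built from a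
parametrix `Q` of `D`, with `S₊ = 1 − QD`, `S₋ = 1 − DQ`. -/
def indexIdempotent {A : Type*} [Ring A] (D Q : A) : Matrix (Fin 2) (Fin 2) A :=
  !![(1 - Q * D) ^ 2, (1 - Q * D) * (1 + (1 - Q * D)) * Q;
     (1 - D * Q) * D, 1 - (1 - D * Q) ^ 2]

/-- The stabilization `p(Q) ⊕ 1_k ⊕ 0_m` of the index idempotent. -/
def stabilizedIdempotent {A : Type*} [Ring A] (D Q : A) (k m : ℕ) :
    Matrix (Fin 2 ⊕ (Fin k ⊕ Fin m)) (Fin 2 ⊕ (Fin k ⊕ Fin m)) A :=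
  Matrix.fromBlocks (indexIdempotent D Q) 0 0
    (Matrix.fromBlocks (1 : Matrix (Fin k) (Fin k) A) 0 0 (0 : Matrix (Fin m) (Fin m) A))

section Aux

variable {A : Type*} [Ring A]

/-- The invertible matrix `V(Q) = [[S₊, −(1+S₊)Q], [D, S₋]]` with
`p(Q) = V(Q) · diag(1,0) · V(Q)⁻¹`. -/
def paramV (D Q : A) : Matrix (Fin 2) (Fin 2) A :=
  !![1 - Q * D, -((1 + (1 - Q * D)) * Q); D, 1 - D * Q]

/-- The inverse of `paramV`. -/
def paramW (D Q : A) : Matrix (Fin 2) (Fin 2) A :=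
  !![1 - Q * D, (1 + (1 - Q * D)) * Q; -D, 1 - D * Q]

lemma paramV_mul_paramW (D Q : A) : paramV D Q * paramW D Q = 1 := by
  rw [paramV, paramW, Matrix.mul_fin_two, Matrix.one_fin_two]
  ext i j
  fin_cases i <;> fin_cases j <;> simp <;> noncomm_ring

lemma paramW_mul_paramV (D Q : A) : paramW D Q * paramV D Q = 1 := by
  rw [paramV, paramW, Matrix.mul_fin_two, Matrix.one_fin_two]
  ext i j
  fin_cases i <;> fin_cases j <;> simp <;> noncomm_ring

lemma paramV_conj (D Q : A) :
    paramV D Q * !![(1:A),0;0,0] * paramW D Q = indexIdempotent D Q := by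
  rw [paramV, paramW, indexIdempotent, Matrix.mul_fin_two, Matrix.mul_fin_two]
  ext i j
  fin_cases i <;> fin_cases j <;> simp <;> noncomm_ring

lemma paramVW_mul_paramVW (D Q R S : A) :
    (paramV D Q * paramW D R) * (paramV D R * paramW D S) = paramV D Q * paramW D S := by
  rw [mul_assoc, ← mul_assoc (paramW D R), paramW_mul_paramV, one_mul]

lemma paramV_sub_mem (I : TwoSidedIdeal A) (D P P' : A)
    (hPplus : 1 - P * D ∈ I) (hPminus : 1 - D * P ∈ I)
    (hP'plus : 1 - P' * D ∈ I) (hP'minus : 1 - D * P' ∈ I) :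
    ∀ i j, (paramV D P' - paramV D P) i j ∈ I := by
  have hsub : P - P' ∈ I := by
    have h : P - P' = P * (1 - D * P') - (1 - P * D) * P' := by noncomm_ring
    rw [h]
    exact I.sub_mem (I.mul_mem_left _ _ hP'minus) (I.mul_mem_right _ _ hPplus)
  intro i j
  fin_cases i <;> fin_cases j <;> simp [paramV, Matrix.sub_apply]
  · have h : P * D - P' * D = (1 - P' * D) - (1 - P * D) := by noncomm_ring
    rw [h]; exact I.sub_mem hP'plus hPplus
  · have h : -((1 + (1 - P' * D)) * P') + (1 + (1 - P * D)) * P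
        = ((P - P') + ((P - P') - P * D * (P - P')))
          - ((1 - P' * D) - (1 - P * D)) * P' := by noncomm_ring
    rw [h]
    exact I.sub_mem
      (I.add_mem hsub (I.sub_mem hsub (I.mul_mem_left _ _ hsub)))
      (I.mul_mem_right _ _ (I.sub_mem hP'plus hPplus))
  · have h : D * P - D * P' = (1 - D * P') - (1 - D * P) := by noncomm_ring
    rw [h]; exact I.sub_mem hP'minus hPminus

end Aux

/-- Independence of the index class of the choice of parametrix: if `P` and `P'` are
both parametrices of `D` modulo the two-sided ideal `I` (i.e. `1 − PD, 1 − DP, 1 − P'D,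
1 − DP' ∈ I`), then `[p(P)] − [p₀] = [p(P')] − [p₀]` in `K₀(I)`: after stabilizing by
`1_k ⊕ 0_m`, the idempotents `p(P)` and `p(P')` are conjugate by an invertible element
congruent to `1` modulo `I`. -/
theorem index_class_independent_of_parametrix {A : Type*} [Ring A]
    (I : TwoSidedIdeal A) (D P P' : A)
    (hPplus : 1 - P * D ∈ I) (hPminus : 1 - D * P ∈ I)
    (hP'plus : 1 - P' * D ∈ I) (hP'minus : 1 - D * P' ∈ I) :
    ∃ (k m : ℕ) (u : Matrix (Fin 2 ⊕ (Fin k ⊕ Fin m)) (Fin 2 ⊕ (Fin k ⊕ Fin m)) A),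
      IsUnit u ∧
      (∀ i j, ((u - 1 : Matrix (Fin 2 ⊕ (Fin k ⊕ Fin m)) (Fin 2 ⊕ (Fin k ⊕ Fin m)) A)) i j ∈ I) ∧
      u * stabilizedIdempotent D P k m = stabilizedIdempotent D P' k m * u := by
  classical
  set u₂ : Matrix (Fin 2) (Fin 2) A := paramV D P' * paramW D P with hu₂
  set u₂' : Matrix (Fin 2) (Fin 2) A := paramV D P * paramW D P' with hu₂'
  have huu' : u₂ * u₂' = 1 := by
    rw [hu₂, hu₂', paramVW_mul_paramVW, paramV_mul_paramW]
  have hu'u : u₂' * u₂ = 1 := by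
    rw [hu₂, hu₂', paramVW_mul_paramVW, paramV_mul_paramW]
  -- the key conjugation identity in M₂(A)
  have hkey : u₂ * indexIdempotent D P = indexIdempotent D P' * u₂ := by
    rw [hu₂, ← paramV_conj D P, ← paramV_conj D P']
    simp only [mul_assoc]
    rw [← mul_assoc (paramW D P) (paramV D P), paramW_mul_paramV, one_mul,
        ← mul_assoc (paramW D P') (paramV D P'), paramW_mul_paramV, one_mul]
  refine ⟨0, 0,
    Matrix.fromBlocks u₂ 0 0 (1 : Matrix (Fin 0 ⊕ Fin 0) (Fin 0 ⊕ Fin 0) A), ?_, ?_, ?_⟩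
  · refine ⟨⟨_, Matrix.fromBlocks u₂' 0 0 (1 : Matrix (Fin 0 ⊕ Fin 0) (Fin 0 ⊕ Fin 0) A),
      ?_, ?_⟩, rfl⟩
    · show Matrix.fromBlocks u₂ 0 0 1 * Matrix.fromBlocks u₂' 0 0 1 = 1
      rw [Matrix.fromBlocks_multiply]
      simp [huu', Matrix.fromBlocks_one]
    · show Matrix.fromBlocks u₂' 0 0 1 * Matrix.fromBlocks u₂ 0 0 1 = 1
      rw [Matrix.fromBlocks_multiply]
      simp [hu'u, Matrix.fromBlocks_one]
  · intro i j
    have h2 : ∀ a b, (u₂ - 1) a b ∈ I := by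
      have hsub : u₂ - 1 = (paramV D P' - paramV D P) * paramW D P := by
        rw [Matrix.sub_mul, hu₂, paramV_mul_paramW]
      intro a b
      rw [hsub, Matrix.mul_apply, Fin.sum_univ_two]
      exact I.add_mem
        (I.mul_mem_right _ _
          (paramV_sub_mem I D P P' hPplus hPminus hP'plus hP'minus a 0))
        (I.mul_mem_right _ _
          (paramV_sub_mem I D P P' hPplus hPminus hP'plus hP'minus a 1))
    rcases i with i | i
    · rcases j with j | j
      · simpa [Matrix.fromBlocks, Matrix.sub_apply, Matrix.one_apply] using h2 i j
      · rcases j with j | j <;> exact j.elim0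
    · rcases i with i | i <;> exact i.elim0
  · rw [stabilizedIdempotent, stabilizedIdempotent, Matrix.fromBlocks_multiply,
      Matrix.fromBlocks_multiply]
    simp [hkey]
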